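/- Each generator S_j := I + (2/(n-1))·e_j·𝟙^T - (2n/(n-1))·e_j·e_j^T of the n-dimensional Apollonian group satisfies S_j^T Q_{D,n} S_j = Q_{D,n}, i.e., S_j ∈ Aut(Q_{D,n}). -/

import Mathlib

open Matrix

/-- Descartes quadratic form matrix in dimension `n`. -/
noncomputable def QD (n : ℕ) : Matrix (Fin (n+2)) (Fin (n+2)) ℝ :=
  1 - (n : ℝ)⁻¹ • Matrix.of (fun _ _ => (1 : ℝ))

/-- Wilker quadratic form matrix in dimension `n`. -/
def QW (n : ℕ) : Matrix (Fin (n+2)) (Fin (n+2)) ℝ :=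
  Matrix.of (fun i j =>
    if (i = 0 ∧ j = 1) ∨ (i = 1 ∧ j = 0) then (-4 : ℝ)
    else if i = j then (if 2 ≤ (i : ℕ) then 2 else 0) else 0)

/-- Apollonian group generator `S j` in dimension `n`. -/
noncomputable def S (n : ℕ) (j : Fin (n+2)) : Matrix (Fin (n+2)) (Fin (n+2)) ℝ :=
  Matrix.of (fun i k =>
    if i = j then (if k = j then -1 else 2 / ((n : ℝ) - 1))
    else if i = k then 1 else 0)

/-- Dual Apollonian group generator `S j ^⊥` in dimension `n`. -/
def Sperp (n : ℕ) (j : Fin (n+2)) : Matrix (Fin (n+2)) (Fin (n+2)) ℝ :=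
  Matrix.of (fun i k =>
    if k = j then (if i = j then -1 else 2)
    else if i = k then 1 else 0)

/-! `S n j` is the reflection in the basis vector `e_j` that is orthogonal for the bilinear form
of `QD n`: since `e_jᵀ Q e_j = 1 - 1/n`, the Q-reflection `x ↦ x - 2 (e_jᵀ Q x)/(e_jᵀ Q e_j) e_j`
is exactly `S n j`. Orthogonal reflections preserve the form they are built from. -/

namespace Matrix

variable {m K : Type*} [Fintype m] [DecidableEq m] [Field K]

/-- The reflection `x ↦ x - (2 B(u, x) / B(u, u)) u` for the bilinear form `B(x, y) = xᵀ Q y`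
(which is `1` when `B(u, u) = 0`). -/
def orthoReflection (Q : Matrix m m K) (u : m → K) : Matrix m m K :=
  1 - (2 / (u ⬝ᵥ Q *ᵥ u)) • vecMulVec u (Q *ᵥ u)

theorem transpose_mul_mul_orthoReflection {Q : Matrix m m K} (hQ : Q.IsSymm) (u : m → K) :
    (orthoReflection Q u)ᵀ * Q * orthoReflection Q u = Q := by
  have hvecMul : u ᵥ* Q = Q *ᵥ u := by rw [← mulVec_transpose, hQ.eq]
  have hscalar : 2 / (u ⬝ᵥ Q *ᵥ u) * (2 / (u ⬝ᵥ Q *ᵥ u)) * (u ⬝ᵥ Q *ᵥ u) =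
      2 * (2 / (u ⬝ᵥ Q *ᵥ u)) := by
    rcases eq_or_ne (u ⬝ᵥ Q *ᵥ u) 0 with h | h
    · simp [h]
    · field_simp
  unfold orthoReflection
  generalize 2 / (u ⬝ᵥ Q *ᵥ u) = k at *
  simp only [transpose_sub, transpose_one, transpose_smul, transpose_vecMulVec, sub_mul, mul_sub,
    one_mul, mul_one, smul_mul, Matrix.mul_smul, smul_mulVec, smul_vecMulVec, smul_smul,
    vecMulVec_mul, mul_vecMulVec, vecMulVec_mulVec, op_smul_eq_smul, hvecMul,
    dotProduct_comm (Q *ᵥ u) u]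
  rw [← mul_assoc, hscalar]
  module

end Matrix

theorem QD_isSymm (n : ℕ) : (QD n).IsSymm :=
  isSymm_one.sub ((IsSymm.ext fun _ _ => rfl).smul _)

theorem QD_mulVec_single (n : ℕ) (j : Fin (n + 2)) :
    QD n *ᵥ Pi.single j 1 = Pi.single j 1 - fun _ => (n : ℝ)⁻¹ := by
  ext i
  simp [QD, one_apply, Pi.single_apply]

theorem single_dotProduct_QD_mulVec_single (n : ℕ) (j : Fin (n + 2)) :
    Pi.single j 1 ⬝ᵥ QD n *ᵥ Pi.single j 1 = 1 - (n : ℝ)⁻¹ := by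
  simp [QD]

theorem S_eq_orthoReflection {n : ℕ} (hn : 1 < n) (j : Fin (n + 2)) :
    S n j = orthoReflection (QD n) (Pi.single j 1) := by
  have hn0 : (n : ℝ) ≠ 0 := by positivity
  have hn1 : (n : ℝ) - 1 ≠ 0 := sub_ne_zero.mpr (by exact_mod_cast hn.ne')
  have hdiag : 1 - 2 / (1 - (n : ℝ)⁻¹) * (1 - (n : ℝ)⁻¹) = -1 := by
    field_simp
    ring
  have hoff : 2 / (1 - (n : ℝ)⁻¹) * (n : ℝ)⁻¹ = 2 / ((n : ℝ) - 1) := by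
    field_simp
  ext i k
  rw [orthoReflection, single_dotProduct_QD_mulVec_single, QD_mulVec_single]
  rcases eq_or_ne i j with rfl | hij
  · rcases eq_or_ne k i with rfl | hki
    · simp [S, vecMulVec_apply, hdiag]
    · simp [S, vecMulVec_apply, hki, hki.symm, hoff]
  · simp [S, vecMulVec_apply, hij, one_apply]

theorem S_mem_aut_QD (n : ℕ) (hn : 2 ≤ n) (j : Fin (n+2)) :
    (S n j)ᵀ * QD n * S n j = QD n := by
  rw [S_eq_orthoReflection hn]
  exact transpose_mul_mul_orthoReflection (QD_isSymm n) _
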